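/- Let H be a complex Hilbert space with dim H = ℵ₀, let K(H) be the C*-algebra of compact operators on H, let {ξ_i : i ∈ ℕ} be an orthonormal basis for H, and let W be a Hilbert C*-module over K(H) with an orthonormal basis {w_i : i ∈ ℕ} satisfying ⟨w_i, w_i⟩ = ξ_i ⊗ ξ_i for all i ∈ ℕ. Then for every a ∈ K(H), the series Σ_{i=1}^∞ w_i a converges in W, and ⟨Σ_{i=1}^∞ w_i a, Σ_{i=1}^∞ w_i a⟩ = a*a. -/

import Mathlib

open Metric ContinuousLinearMap in
/-- **Schauder's theorem** for Hilbert space: the adjoint of a compact operator is compact. -/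
theorem IsCompactOperator.star_clm {H : Type*} [NormedAddCommGroup H] [InnerProductSpace ℂ H]
    [CompleteSpace H] {f : H →L[ℂ] H} (hf : IsCompactOperator f) :
    IsCompactOperator ⇑(star f) := by
  have hA : IsCompactOperator ⇑(f ∘L (star f)) := by
    exact hf.comp_clm (star f)
  have goal_iff := isCompactOperator_iff_isCompact_closure_image_closedBall
    ((star f : H →L[ℂ] H) : H →ₗ[ℂ] H) zero_lt_one
  refine goal_iff.mpr (isCompact_iff_totallyBounded_isComplete.mpr ⟨?_, isClosed_closure.isComplete⟩)
  refine TotallyBounded.closure ?_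
  rw [Metric.totallyBounded_iff]
  intro ε hε
  set A := f ∘L (star f) with hAdef
  have hAtb : TotallyBounded (⇑A '' closedBall 0 1) := by
    have h1 := (isCompactOperator_iff_isCompact_closure_image_closedBall
      ((A : H →L[ℂ] H) : H →ₗ[ℂ] H) zero_lt_one).mp hA
    exact h1.totallyBounded.subset subset_closure
  obtain ⟨t, htsub, htfin, hcov⟩ := totallyBounded_iff_subset.mp hAtb
      {p : H × H | dist p.1 p.2 < ε ^ 2 / 8} (Metric.dist_mem_uniformity (by positivity))
  -- choose preimages of the centers
  have hchoice : ∀ y ∈ t, ∃ u ∈ closedBall (0 : H) 1, A u = y := fun y hy => by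
    obtain ⟨u, hu, hu'⟩ := htsub hy
    exact ⟨u, hu, hu'⟩
  classical
  choose u hu hAu using hchoice
  refine ⟨(fun y => if hy : y ∈ t then star f (u y hy) else 0) '' t, htfin.image _, ?_⟩
  rintro w ⟨x, hx, rfl⟩
  obtain ⟨y, hy, hdy⟩ : ∃ y ∈ t, dist (A x) y < ε ^ 2 / 8 := by
    have := hcov ⟨x, hx, rfl⟩
    simp only [Set.mem_iUnion, Set.mem_setOf_eq] at this
    obtain ⟨y, hy, hd⟩ := this
    exact ⟨y, hy, hd⟩
  simp only [Set.mem_iUnion, mem_ball]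
  refine ⟨star f (u y hy), ⟨y, hy, by simp [hy]⟩, ?_⟩
  -- estimate
  set z := x - u y hy with hz
  have hznorm : ‖z‖ ≤ 2 := by
    have h1 : ‖x‖ ≤ 1 := by simpa using hx
    have h2 : ‖u y hy‖ ≤ 1 := by simpa using hu y hy
    calc ‖z‖ ≤ ‖x‖ + ‖u y hy‖ := norm_sub_le _ _
    _ ≤ 2 := by linarith
  have hAz : ‖A z‖ < ε ^ 2 / 8 := by
    have : A z = A x - y := by rw [hz, map_sub, hAu y hy]
    rw [this, ← dist_eq_norm]
    exact hdy
  have hkey : ‖star f z‖ ^ 2 ≤ ‖z‖ * ‖A z‖ := by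
    have h1 : ‖star f z‖ ^ 2 = RCLike.re (inner ℂ (star f z) (star f z)) := by
      exact norm_sq_eq_re_inner (𝕜 := ℂ) _
    have h2 : inner ℂ (star f z) (star f z) = inner ℂ z (A z) := by
      rw [star_eq_adjoint]
      rw [adjoint_inner_left]
      rfl
    have h3 : RCLike.re (inner ℂ z (A z)) ≤ ‖inner ℂ z (A z)‖ := RCLike.re_le_norm _
    have h4 : ‖inner ℂ z (A z)‖ ≤ ‖z‖ * ‖A z‖ := norm_inner_le_norm _ _
    rw [h1, h2]
    exact h3.trans h4
  have hfz : ‖star f z‖ ^ 2 < ε ^ 2 / 4 := by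
    have hAz0 : 0 ≤ ‖A z‖ := norm_nonneg _
    nlinarith [hkey, hznorm, hAz, norm_nonneg z]
  have : dist (star f x) (star f (u y hy)) = ‖star f z‖ := by
    rw [dist_eq_norm, ← map_sub, hz]
  show dist ((star f) x) ((star f) (u y hy)) < ε
  rw [this]
  nlinarith [norm_nonneg ((star f) z), hfz, hε]

noncomputable section

variable (H : Type*) [NormedAddCommGroup H] [InnerProductSpace ℂ H] [CompleteSpace H]

/-- The compact operators on the Hilbert space `H`, as a non-unital star subalgebra
of `H →L[ℂ] H`. -/
def compactStarAlgebra : NonUnitalStarSubalgebra ℂ (H →L[ℂ] H) where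
  carrier := {T : H →L[ℂ] H | IsCompactOperator T}
  add_mem' hf hg := hf.add hg
  zero_mem' := isCompactOperator_zero
  smul_mem' c _ hf := hf.smul c
  mul_mem' {f g} hf _ := by simpa [Function.comp_def] using hf.comp_clm g
  star_mem' {f} hf := hf.star_clm

/-- `K(H)`, the C*-algebra of compact operators on the Hilbert space `H`. -/
abbrev KH := ↥(compactStarAlgebra H)

instance : CStarRing (KH H) where
  norm_mul_self_le x := by simpa using CStarRing.norm_mul_self_le (x : H →L[ℂ] H)

instance : CompleteSpace (KH H) :=
  (isClosed_setOf_isCompactOperator (σ₁₂ := RingHom.id ℂ) (M₁ := H) (M₂ := H)).completeSpace_coe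

variable {H}

/-- The rank one operator `ξ ⊗ η : ν ↦ (ν, η)ξ` (inner product linear in the first slot,
i.e. `(ν, η) = ⟪η, ν⟫` in Mathlib's convention). -/
def rankOneOp (ξ η : H) : H →L[ℂ] H := (innerSL ℂ η).smulRight ξ

set_option linter.unusedSectionVars false in
theorem isCompactOperator_rankOneOp (ξ η : H) : IsCompactOperator ⇑(rankOneOp ξ η) := by
  refine (isCompactOperator_iff_image_closedBall_subset_compact
    ((rankOneOp ξ η : H →L[ℂ] H) : H →ₗ[ℂ] H) zero_lt_one).mpr ?_
  refine ⟨(fun c : ℂ => c • ξ) '' Metric.closedBall 0 ‖η‖,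
    (isCompact_closedBall 0 ‖η‖).image (by fun_prop), ?_⟩
  rintro x ⟨ν, hν, rfl⟩
  refine ⟨inner ℂ η ν, ?_, rfl⟩
  simp only [Metric.mem_closedBall, dist_zero_right] at hν ⊢
  calc ‖inner ℂ η ν‖ ≤ ‖η‖ * ‖ν‖ := norm_inner_le_norm η ν
  _ ≤ ‖η‖ := by nlinarith [norm_nonneg (η : H)]

/-- The rank one operator `ξ ⊗ η` as an element of `K(H)`. -/
def KH.rankOne (ξ η : H) : KH H := ⟨rankOneOp ξ η, isCompactOperator_rankOneOp ξ η⟩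

/-- A Hilbert C*-module structure on `W` over a C*-algebra `A`: a right `A`-action `smul`
and an `A`-valued inner product `inner` satisfying the usual axioms, whose induced norm
`‖⟨x,x⟩‖ ^ (1/2)` coincides with the (complete) norm of `W`.  Positivity `⟨x,x⟩ ≥ 0` is
encoded through its C*-algebraic characterization `∃ b, ⟨x,x⟩ = b* ⬝ b`. -/
structure HilbertModule (A : Type*) (W : Type*)
    [NonUnitalNormedRing A] [StarRing A] [CStarRing A] [NormedSpace ℂ A]
    [IsScalarTower ℂ A A] [SMulCommClass ℂ A A] [StarModule ℂ A] [CompleteSpace A]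
    [NormedAddCommGroup W] [NormedSpace ℂ W] [CompleteSpace W] : Type _ where
  smul : W → A → W
  inner : W → W → A
  add_smul' : ∀ x y a, smul (x + y) a = smul x a + smul y a
  smul_add' : ∀ x a b, smul x (a + b) = smul x a + smul x b
  smul_assoc' : ∀ x a b, smul (smul x a) b = smul x (a * b)
  smul_complex₁ : ∀ (c : ℂ) x a, smul (c • x) a = c • smul x a
  smul_complex₂ : ∀ (c : ℂ) x a, smul x (c • a) = c • smul x a
  inner_add_left : ∀ x y z, inner (x + y) z = inner x z + inner y z
  inner_add_right : ∀ x y z, inner x (y + z) = inner x y + inner x z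
  inner_smul_right : ∀ x y a, inner x (smul y a) = inner x y * a
  inner_smul_complex : ∀ (c : ℂ) x y, inner x (c • y) = c • inner x y
  star_inner : ∀ x y, star (inner x y) = inner y x
  inner_self_nonneg : ∀ x, ∃ a, inner x x = star a * a
  inner_self_eq_zero : ∀ x, inner x x = 0 ↔ x = 0
  norm_sq_eq : ∀ x, ‖x‖ ^ 2 = ‖inner x x‖

/-- A minimal projection in an algebra `A`: a nonzero self-adjoint idempotent `e`
with `e ⬝ A ⬝ e = ℂ ⬝ e`. -/
def IsMinimalProjection {A : Type*} [NonUnitalNormedRing A] [StarRing A] [NormedSpace ℂ A]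
    (e : A) : Prop :=
  star e = e ∧ e * e = e ∧ e ≠ 0 ∧ ∀ a : A, ∃ c : ℂ, e * a * e = c • e

/-- An orthonormal basis `{w i}` of a Hilbert C*-module: each `⟨wᵢ, wᵢ⟩` is a minimal
projection, `⟨wᵢ, wⱼ⟩ = 0` for `i ≠ j`, and the submodule generated by the `wᵢ`
is dense in `W`. -/
def HilbertModule.IsOrthonormalBasis {A W : Type*}
    [NonUnitalNormedRing A] [StarRing A] [CStarRing A] [NormedSpace ℂ A]
    [IsScalarTower ℂ A A] [SMulCommClass ℂ A A] [StarModule ℂ A] [CompleteSpace A]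
    [NormedAddCommGroup W] [NormedSpace ℂ W] [CompleteSpace W]
    (M : HilbertModule A W) {ι : Type*} (w : ι → W) : Prop :=
  (∀ i, IsMinimalProjection (M.inner (w i) (w i))) ∧
  (∀ i j, i ≠ j → M.inner (w i) (w j) = 0) ∧
  closure (↑(Submodule.span ℂ
      (Set.range w ∪ {x | ∃ (i : ι) (a : A), M.smul (w i) a = x})) : Set W) = Set.univ

/-!
Orthogonality of the `wᵢ` gives `⟨∑_{i∈s} wᵢ a, ∑_{i∈s} wᵢ a⟩ = a* pₛ a = (pₛ a)* (pₛ a)`, where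
`pₛ = ∑_{i∈s} ξᵢ ⊗ ξᵢ` is a projection, so by the C*-identity `‖∑_{i∈s} wᵢ a‖ = ‖pₛ a‖`.
The projections `pₛ` tend strongly to the identity with `‖1 - pₛ‖ ≤ 1`, and `a` is compact, so
`pₛ a → a` in norm. Hence the series `∑ wᵢ a` satisfies the Cauchy criterion, and continuity of
the inner product gives `⟨L, L⟩ = lim (pₛ a)* (pₛ a) = a* a`.
-/

open Filter Topology InnerProductSpace

theorem IsStarProjection.sum {R ι : Type*} [NonUnitalSemiring R] [StarRing R] {p : ι → R}
    {s : Finset ι} (hp : ∀ i ∈ s, IsStarProjection (p i))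
    (horth : (s : Set ι).Pairwise fun i j => p i * p j = 0) :
    IsStarProjection (∑ i ∈ s, p i) := by
  classical
  induction s using Finset.induction_on with
  | empty => simp [IsStarProjection.zero]
  | insert j s hj ih =>
    rw [Finset.sum_insert hj]
    refine (hp j (s.mem_insert_self j)).add
      (ih (fun i hi => hp i (Finset.mem_insert_of_mem hi)) (horth.mono (by simp))) ?_
    rw [Finset.mul_sum]
    refine Finset.sum_eq_zero fun i hi => horth (by simp) (by simp [hi]) ?_
    rintro rfl
    exact hj hi

theorem IsStarProjection.star_mul_self_mul {R : Type*} [NonUnitalSemiring R] [StarRing R]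
    {p : R} (hp : IsStarProjection p) (a : R) : star (p * a) * (p * a) = star a * p * a := by
  rw [star_mul, hp.isSelfAdjoint.star_eq, mul_assoc, ← mul_assoc p, hp.isIdempotentElem.eq,
    mul_assoc]

theorem Summable.of_norm_sum_le {ι E F : Type*} [NormedAddCommGroup E] [CompleteSpace E]
    [NormedAddCommGroup F] {f : ι → E} {g : ι → F} (hg : Summable g)
    (h : ∀ s : Finset ι, ‖∑ i ∈ s, f i‖ ≤ ‖∑ i ∈ s, g i‖) : Summable f := by
  rw [summable_iff_vanishing_norm]
  intro ε hε
  obtain ⟨s, hs⟩ := hg.vanishing (Metric.ball_mem_nhds 0 hε)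
  exact ⟨s, fun t ht => (h t).trans_lt (mem_ball_zero_iff.1 (hs t ht))⟩

section CompactOperator

variable {ι 𝕜 E F G : Type*} [RCLike 𝕜] [NormedAddCommGroup E] [NormedSpace 𝕜 E]
  [NormedAddCommGroup F] [NormedSpace 𝕜 F] [NormedAddCommGroup G] [NormedSpace 𝕜 G]
  {l : Filter ι} {T : ι → F →L[𝕜] G} {C : ℝ}

theorem ContinuousLinearMap.tendstoUniformlyOn_zero_of_isCompact (hC : ∀ i, ‖T i‖ ≤ C)
    (hT : ∀ y, Tendsto (fun i => T i y) l (𝓝 0)) {K : Set F} (hK : IsCompact K) :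
    TendstoUniformlyOn (fun i y => T i y) 0 l K := by
  rw [Metric.tendstoUniformlyOn_iff]
  intro ε hε
  obtain ⟨δ, hδ, hCδ⟩ := exists_pos_mul_lt (half_pos hε) C
  obtain ⟨t, -, ht, hKt⟩ := hK.finite_cover_balls hδ
  have hnet : ∀ᶠ i in l, ∀ z ∈ t, ‖T i z‖ < ε / 2 :=
    (eventually_all_finite ht).2 fun z _ =>
      (hT z).norm.eventually_lt_const (by simpa using half_pos hε)
  filter_upwards [hnet] with i hi y hy
  obtain ⟨z, hz, hyz⟩ := Set.mem_iUnion₂.1 (hKt hy)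
  rw [Pi.zero_apply, dist_zero_left]
  calc ‖T i y‖ = ‖T i (y - z) + T i z‖ := by rw [← map_add, sub_add_cancel]
    _ ≤ ‖T i‖ * ‖y - z‖ + ‖T i z‖ := norm_add_le_of_le ((T i).le_opNorm _) le_rfl
    _ < C * δ + ε / 2 := by
      refine add_lt_add_of_le_of_lt ?_ (hi z hz)
      rw [← dist_eq_norm]
      exact mul_le_mul (hC i) (Metric.mem_ball.1 hyz).le dist_nonneg
        ((norm_nonneg _).trans (hC i))
    _ < ε := by linarith

theorem IsCompactOperator.tendsto_comp_zero (hC : ∀ i, ‖T i‖ ≤ C)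
    (hT : ∀ y, Tendsto (fun i => T i y) l (𝓝 0)) {a : E →L[𝕜] F} (ha : IsCompactOperator a) :
    Tendsto (fun i => T i ∘L a) l (𝓝 0) := by
  obtain ⟨K, hK, haK⟩ := ha.image_closedBall_subset_compact 1
  have hunif := Metric.tendstoUniformlyOn_iff.1
    (ContinuousLinearMap.tendstoUniformlyOn_zero_of_isCompact hC hT hK)
  rw [Metric.tendsto_nhds]
  intro ε hε
  filter_upwards [hunif (ε / 2) (half_pos hε)] with i hi
  rw [dist_zero_right]
  refine (ContinuousLinearMap.opNorm_le_of_unit_norm (half_pos hε).le fun x hx => ?_).trans_lt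
    (half_lt_self hε)
  have := hi (a x) (haK ⟨x, by simp [hx], rfl⟩)
  rw [Pi.zero_apply, dist_zero_left] at this
  exact this.le

end CompactOperator

section RankOne

variable {ι 𝕜 E F : Type*} [RCLike 𝕜] [NormedAddCommGroup E] [InnerProductSpace 𝕜 E]
  [NormedAddCommGroup F] [NormedSpace 𝕜 F]

theorem HilbertBasis.hasSum_rankOne_apply (b : HilbertBasis ι 𝕜 E) (x : E) :
    HasSum (fun i => rankOne 𝕜 (b i) (b i) x) x := by
  simpa [b.repr_apply_apply] using b.hasSum_repr x

variable [CompleteSpace E]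

theorem Orthonormal.isStarProjection_sum_rankOne {v : ι → E} (hv : Orthonormal 𝕜 v)
    (s : Finset ι) : IsStarProjection (∑ i ∈ s, rankOne 𝕜 (v i) (v i)) :=
  IsStarProjection.sum (fun i _ => isStarProjection_rankOne_self (hv.1 i))
    fun i _ j _ hij => show _ * _ = 0 by
      rw [ContinuousLinearMap.mul_def, rankOne_comp_rankOne, hv.inner_eq_zero hij, zero_smul]

theorem HilbertBasis.hasSum_rankOne_comp (b : HilbertBasis ι 𝕜 E) {a : F →L[𝕜] E}
    (ha : IsCompactOperator a) : HasSum (fun i => rankOne 𝕜 (b i) (b i) ∘L a) a := by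
  set P : Finset ι → E →L[𝕜] E := fun s => ∑ i ∈ s, rankOne 𝕜 (b i) (b i)
  have hbound : ∀ s, ‖1 - P s‖ ≤ 1 := fun s =>
    ((b.orthonormal.isStarProjection_sum_rankOne s).one_sub).norm_le
  have hpointwise : ∀ x, Tendsto (fun s => (1 - P s) x) atTop (𝓝 0) := fun x => by
    simpa [P] using (b.hasSum_rankOne_apply x).const_sub x
  have hcomp : ∀ s, a - (1 - P s) ∘L a = ∑ i ∈ s, rankOne 𝕜 (b i) (b i) ∘L a := fun s => by
    ext x
    simp [P]
  have := (ha.tendsto_comp_zero hbound hpointwise).const_sub a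
  rw [sub_zero] at this
  exact this.congr hcomp

end RankOne

namespace KH

theorem coe_rankOne (ξ η : H) :
    (KH.rankOne ξ η : H →L[ℂ] H) = InnerProductSpace.rankOne ℂ ξ η :=
  rfl

theorem isStarProjection_sum_rankOne {ι : Type*} {ξ : ι → H} (hξ : Orthonormal ℂ ξ)
    (s : Finset ι) : IsStarProjection (∑ i ∈ s, KH.rankOne (ξ i) (ξ i)) := by
  have h := hξ.isStarProjection_sum_rankOne s
  exact ⟨Subtype.ext (by simpa [coe_rankOne] using h.isIdempotentElem.eq),
    Subtype.ext (by simpa [coe_rankOne] using h.isSelfAdjoint.star_eq)⟩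

theorem hasSum_rankOne_mul {ι : Type*} (ξ : HilbertBasis ι ℂ H) (a : KH H) :
    HasSum (fun i => KH.rankOne (ξ i) (ξ i) * a) a :=
  (Topology.IsInducing.subtypeVal.hasSum_iff (g := (compactStarAlgebra H).subtype) _ _).1
    (ξ.hasSum_rankOne_comp a.2)

end KH

namespace HilbertModule

variable {A W : Type*} [NonUnitalNormedRing A] [StarRing A] [CStarRing A] [NormedSpace ℂ A]
  [IsScalarTower ℂ A A] [SMulCommClass ℂ A A] [StarModule ℂ A] [CompleteSpace A]
  [NormedAddCommGroup W] [NormedSpace ℂ W] [CompleteSpace W] (M : HilbertModule A W)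

def innerRight (x : W) : W →+ A := AddMonoidHom.mk' (M.inner x) (M.inner_add_right x)

def innerLeft (y : W) : W →+ A := AddMonoidHom.mk' (M.inner · y) (M.inner_add_left · · y)

theorem inner_zero_left (y : W) : M.inner 0 y = 0 := map_zero (M.innerLeft y)

theorem inner_zero_right (x : W) : M.inner x 0 = 0 := map_zero (M.innerRight x)

theorem inner_sum_left {ι : Type*} (s : Finset ι) (f : ι → W) (y : W) :
    M.inner (∑ i ∈ s, f i) y = ∑ i ∈ s, M.inner (f i) y :=
  map_sum (M.innerLeft y) f s

theorem inner_sum_right {ι : Type*} (s : Finset ι) (f : ι → W) (x : W) :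
    M.inner x (∑ i ∈ s, f i) = ∑ i ∈ s, M.inner x (f i) :=
  map_sum (M.innerRight x) f s

theorem inner_smul_left (x y : W) (a : A) : M.inner (M.smul x a) y = star a * M.inner x y := by
  rw [← M.star_inner, M.inner_smul_right, star_mul, M.star_inner]

theorem inner_smul_complex_left (c : ℂ) (x y : W) :
    M.inner (c • x) y = star c • M.inner x y := by
  rw [← M.star_inner, M.inner_smul_complex, star_smul, M.star_inner]

theorem inner_add_smul_self (x y : W) (c : ℂ) :
    M.inner (x + c • y) (x + c • y) = M.inner x x + c • M.inner x y + star c • M.inner y x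
      + (c * star c) • M.inner y y := by
  simp only [M.inner_add_left, M.inner_add_right, M.inner_smul_complex,
    M.inner_smul_complex_left, smul_smul]
  abel

theorem polarization (x y : W) :
    (4 : ℂ) • M.inner x y = ∑ k : Fin 4, star (Complex.I ^ (k : ℕ)) •
      M.inner (x + Complex.I ^ (k : ℕ) • y) (x + Complex.I ^ (k : ℕ) • y) := by
  simp only [M.inner_add_smul_self, Fin.sum_univ_four]
  simp only [Fin.isValue, Fin.coe_ofNat_eq_mod, Nat.zero_mod, pow_zero, star_one, one_smul,
    mul_one, smul_add, Nat.one_mod, pow_succ, one_mul, RCLike.star_def, Complex.conj_I, neg_smul,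
    mul_neg, Complex.I_mul_I, neg_neg, smul_smul, neg_mul, smul_neg, Nat.reduceMod, star_neg,
    Nat.mod_succ]
  module

theorem norm_inner_le_sq_add (x y : W) : ‖M.inner x y‖ ≤ (‖x‖ + ‖y‖) ^ 2 := by
  have hterm : ∀ k : ℕ, ‖star (Complex.I ^ k) •
      M.inner (x + Complex.I ^ k • y) (x + Complex.I ^ k • y)‖ ≤ (‖x‖ + ‖y‖) ^ 2 := fun k => by
    rw [norm_smul, norm_star, norm_pow, Complex.norm_I, one_pow, one_mul, ← M.norm_sq_eq]
    gcongr
    refine (norm_add_le _ _).trans ?_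
    rw [norm_smul, norm_pow, Complex.norm_I, one_pow, one_mul]
  have h4 : 4 * ‖M.inner x y‖ ≤ 4 * (‖x‖ + ‖y‖) ^ 2 :=
    calc 4 * ‖M.inner x y‖ = ‖(4 : ℂ) • M.inner x y‖ := by rw [norm_smul]; norm_num
      _ ≤ ∑ _k : Fin 4, (‖x‖ + ‖y‖) ^ 2 := by
        rw [M.polarization]
        exact (norm_sum_le _ _).trans (Finset.sum_le_sum fun k _ => hterm k)
      _ = 4 * (‖x‖ + ‖y‖) ^ 2 := by simp
  linarith

theorem norm_inner_le (x y : W) : ‖M.inner x y‖ ≤ 4 * ‖x‖ * ‖y‖ := by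
  rcases eq_or_ne x 0 with rfl | hx
  · simp [M.inner_zero_left]
  rcases eq_or_ne y 0 with rfl | hy
  · simp [M.inner_zero_right]
  set u : W := ((‖x‖⁻¹ : ℝ) : ℂ) • x
  set v : W := ((‖y‖⁻¹ : ℝ) : ℂ) • y
  have hu : ‖u‖ = 1 := by simp [u, norm_smul, hx]
  have hv : ‖v‖ = 1 := by simp [v, norm_smul, hy]
  have hxy : M.inner x y = ((‖x‖ * ‖y‖ : ℝ) : ℂ) • M.inner u v := by
    simp only [u, v, M.inner_smul_complex, M.inner_smul_complex_left, smul_smul,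
      Complex.star_def, Complex.conj_ofReal]
    rw [← Complex.ofReal_mul, ← Complex.ofReal_mul]
    field_simp
    simp
  calc ‖M.inner x y‖ = ‖x‖ * ‖y‖ * ‖M.inner u v‖ := by
        rw [hxy, norm_smul, Complex.norm_real, Real.norm_of_nonneg (by positivity)]
    _ ≤ ‖x‖ * ‖y‖ * (1 + 1) ^ 2 := by
        gcongr
        simpa [hu, hv] using M.norm_inner_le_sq_add u v
    _ = 4 * ‖x‖ * ‖y‖ := by ring

theorem continuous_inner : Continuous fun p : W × W => M.inner p.1 p.2 :=
  IsBoundedBilinearMap.continuous (𝕜 := ℝ)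
    { add_left := fun x₁ x₂ y => M.inner_add_left x₁ x₂ y
      smul_left := fun c x y => by
        rw [← Complex.coe_smul, M.inner_smul_complex_left, Complex.star_def,
          Complex.conj_ofReal, Complex.coe_smul]
      add_right := fun x y₁ y₂ => M.inner_add_right x y₁ y₂
      smul_right := fun c x y => by rw [← Complex.coe_smul, M.inner_smul_complex, Complex.coe_smul]
      bound := ⟨4, four_pos, M.norm_inner_le⟩ }

theorem norm_eq_of_inner_self_eq {x : W} {b : A} (h : M.inner x x = star b * b) : ‖x‖ = ‖b‖ := by
  have hsq := M.norm_sq_eq x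
  rw [h, CStarRing.norm_star_mul_self, ← sq] at hsq
  exact (pow_left_inj₀ (norm_nonneg _) (norm_nonneg _) two_ne_zero).1 hsq

theorem inner_sum_smul_sum_smul {ι : Type*} {w : ι → W}
    (horth : Pairwise fun i j => M.inner (w i) (w j) = 0) (s : Finset ι) (a b : A) :
    M.inner (∑ i ∈ s, M.smul (w i) a) (∑ i ∈ s, M.smul (w i) b)
      = star a * (∑ i ∈ s, M.inner (w i) (w i)) * b :=
  calc _ = ∑ i ∈ s, ∑ j ∈ s, star a * M.inner (w i) (w j) * b := by
        simp only [M.inner_sum_left, M.inner_sum_right, M.inner_smul_left, M.inner_smul_right,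
          mul_assoc]
    _ = ∑ i ∈ s, star a * M.inner (w i) (w i) * b :=
        Finset.sum_congr rfl fun i hi => Finset.sum_eq_single_of_mem i hi fun j _ hji => by
          rw [horth hji.symm, mul_zero, zero_mul]
    _ = _ := by rw [Finset.mul_sum, Finset.sum_mul]

theorem inner_sum_smul_self {ι : Type*} {w : ι → W}
    (horth : Pairwise fun i j => M.inner (w i) (w j) = 0) {s : Finset ι}
    (hs : IsStarProjection (∑ i ∈ s, M.inner (w i) (w i))) (a : A) :
    M.inner (∑ i ∈ s, M.smul (w i) a) (∑ i ∈ s, M.smul (w i) a)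
      = star (∑ i ∈ s, M.inner (w i) (w i) * a) * ∑ i ∈ s, M.inner (w i) (w i) * a := by
  rw [M.inner_sum_smul_sum_smul horth, ← Finset.sum_mul, hs.star_mul_self_mul]

end HilbertModule

/-- Remark 4.2.
Let `dim H = ℵ₀` with orthonormal basis `{ξ i : i ∈ ℕ}`, and let `W` be a Hilbert
C*-module over `K(H)` with an orthonormal basis `{w i : i ∈ ℕ}` such that
`⟨w i, w i⟩ = ξ i ⊗ ξ i`.  Then for every `a ∈ K(H)` the series `∑ᵢ (w i) ⬝ a` converges
in `W`, and its sum `L` satisfies `⟨L, L⟩ = a* ⬝ a`. -/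
theorem summable_basis_smul_and_inner_self
    {H : Type*} [NormedAddCommGroup H] [InnerProductSpace ℂ H] [CompleteSpace H]
    {W : Type*} [NormedAddCommGroup W] [NormedSpace ℂ W] [CompleteSpace W]
    (M : HilbertModule (KH H) W)
    (ξ : HilbertBasis ℕ ℂ H)
    (w : ℕ → W) (hw : M.IsOrthonormalBasis w)
    (hmatch : ∀ i : ℕ, M.inner (w i) (w i) = KH.rankOne (ξ i) (ξ i))
    (a : KH H) :
    ∃ L : W,
      Filter.Tendsto (fun n : ℕ => ∑ i ∈ Finset.range n, M.smul (w i) a)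
        Filter.atTop (nhds L) ∧
      M.inner L L = star a * a := by
  obtain ⟨-, horth, -⟩ := hw
  have hproj (s : Finset ℕ) : IsStarProjection (∑ i ∈ s, M.inner (w i) (w i)) := by
    simpa only [hmatch] using KH.isStarProjection_sum_rankOne ξ.orthonormal s
  have hsum : HasSum (fun i => M.inner (w i) (w i) * a) a := by
    simpa only [hmatch] using KH.hasSum_rankOne_mul ξ a
  have hinner (s : Finset ℕ) := M.inner_sum_smul_self horth (hproj s) a
  obtain ⟨L, hL⟩ : Summable fun i => M.smul (w i) a :=
    hsum.summable.of_norm_sum_le fun s => (M.norm_eq_of_inner_self_eq (hinner s)).le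
  refine ⟨L, hL.tendsto_sum_nat, tendsto_nhds_unique
    ((M.continuous_inner.tendsto (L, L)).comp (hL.prodMk_nhds hL)) ?_⟩
  simp only [Function.comp_def, hinner]
  exact (Tendsto.star hsum).mul hsum
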